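/- arXiv:1712.08137 — 3 statements merged into one kernel-verified Lean document; each statement's English description precedes it below -/
import Mathlib

section
/- For every integer k with m·⌈2W_m − 1⌉ ≤ k ≤ m·n one has q̃^{(n)}(k) ≤ G · W_m^{⌊k/m⌋} / ⌊k/m⌋!. -/
open Finset

open scoped Classical

noncomputable section

namespace HScut

/-- Level of a jump path `s : Fin n → ℤ` at time `t` (sum of the first `t` jumps). -/
def levelAt (n : ℕ) (s : Fin n → ℤ) (t : ℕ) : ℤ :=
  ∑ i ∈ Finset.univ.filter (fun i : Fin n => (i : ℕ) < t), s i

/-- Jump paths of length `n` with jumps of amplitude at most `m`. -/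
def paths (n m : ℕ) : Finset (Fin n → ℤ) :=
  Fintype.piFinset fun _ => Finset.Icc (-(m : ℤ)) (m : ℤ)

/-- Weight `π(s) = ∏ q (s i)` of a jump path. -/
def pathWeight (n : ℕ) (q : ℤ → ℝ) (s : Fin n → ℤ) : ℝ :=
  ∏ i, q (s i)

/-- Modified weight `π̃(s)`, where each `q (±i)` (`i ≠ 0`) is replaced by `max (q i) (q (-i))`
(which equals `w_i / n`). -/
def modWeight (n : ℕ) (q : ℤ → ℝ) (s : Fin n → ℤ) : ℝ :=
  ∏ i, (if s i = 0 then q 0 else max (q (s i)) (q (-s i)))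

/-- `q^{(n)}(k)`: probability of a net balance of `k` cumulative jumps at maturity. -/
def qfull (n m : ℕ) (q : ℤ → ℝ) (k : ℤ) : ℝ :=
  ∑ s ∈ (paths n m).filter (fun s => levelAt n s n = k), pathWeight n q s

/-- `q̃^{(n)}(k)`: enlarged probability of a net balance of `k` cumulative jumps at maturity. -/
def qtilde (n m : ℕ) (q : ℤ → ℝ) (k : ℤ) : ℝ :=
  ∑ s ∈ (paths n m).filter (fun s => levelAt n s n = k), modWeight n q s

/-- `q^{k̄,(n)}(k)`: probability of a net balance of `k` jumps at maturity while reaching at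
some time a net balance higher than `k̄`. -/
def qup (n m : ℕ) (q : ℤ → ℝ) (kbar : ℕ) (k : ℤ) : ℝ :=
  ∑ s ∈ (paths n m).filter
      (fun s => levelAt n s n = k ∧ ∃ t ≤ n, (kbar : ℤ) + 1 ≤ levelAt n s t),
    pathWeight n q s

/-- `q_{l̄}^{(n)}(k)`: probability of a net balance of `k` jumps at maturity while reaching at
some time a net balance lower than `-l̄`. -/
def qdown (n m : ℕ) (q : ℤ → ℝ) (lbar : ℕ) (k : ℤ) : ℝ :=
  ∑ s ∈ (paths n m).filter
      (fun s => levelAt n s n = k ∧ ∃ t ≤ n, levelAt n s t ≤ -(lbar : ℤ) - 1),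
    pathWeight n q s

/-- `q^{cut,(n)}(k)`: probability of reaching level `k` at maturity without ever leaving the
band `[-l̄, k̄]`. -/
def qcut (n m : ℕ) (q : ℤ → ℝ) (kbar lbar : ℕ) (k : ℤ) : ℝ :=
  ∑ s ∈ (paths n m).filter
      (fun s => levelAt n s n = k ∧
        ∀ t ≤ n, -(lbar : ℤ) ≤ levelAt n s t ∧ levelAt n s t ≤ (kbar : ℤ)),
    pathWeight n q s

/-- `P(j) = C(n,j) p^j (1-p)^(n-j)`. -/
def binomP (n : ℕ) (p : ℝ) (j : ℕ) : ℝ :=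
  (n.choose j : ℝ) * p ^ j * (1 - p) ^ (n - j)

/-- Put payoff at the terminal node `(n, j, k)`. -/
def putPayoff (n : ℕ) (S0 K σ dt h : ℝ) (j : ℕ) (k : ℤ) : ℝ :=
  max (K - S0 * Real.exp ((2 * (j : ℝ) - (n : ℝ)) * (σ * Real.sqrt dt) + h * (k : ℝ))) 0

/-- European put value `V` on the full tree. -/
def Vput (n m : ℕ) (q : ℤ → ℝ) (p S0 K σ τ h r : ℝ) : ℝ :=
  Real.exp (-(r * τ)) *
    ∑ k ∈ Finset.Icc (-((m : ℤ) * n)) ((m : ℤ) * n), ∑ j ∈ Finset.range (n + 1),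
      putPayoff n S0 K σ (τ / n) h j k * binomP n p j * qfull n m q k

/-- European put value `V^{TT}` on the truncated tree. -/
def VTT (n m : ℕ) (q : ℤ → ℝ) (p S0 K σ τ h r : ℝ) (kbar lbar : ℕ) : ℝ :=
  Real.exp (-(r * τ)) *
    ∑ k ∈ Finset.Icc (-(lbar : ℤ)) (kbar : ℤ), ∑ j ∈ Finset.range (n + 1),
      putPayoff n S0 K σ (τ / n) h j k * binomP n p j * qcut n m q kbar lbar k

/-- The sequence `W_i`: `W₁ = w₁`, `W_{i+1} = w_{i+1} + W_i^{(i+1)/i}` (real powers). -/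
def Wseq (w : ℕ → ℝ) : ℕ → ℝ
  | 0 => 0
  | 1 => w 1
  | (i + 2) => w (i + 2) + Wseq w (i + 1) ^ (((i : ℝ) + 2) / ((i : ℝ) + 1))

/-- `M_i = max { W_i, W_i^{(1-i)/i} }` (real powers). -/
def Mseq (w : ℕ → ℝ) (i : ℕ) : ℝ :=
  max (Wseq w i) (Wseq w i ^ ((1 - (i : ℝ)) / (i : ℝ)))

/-- `G = 2 m max{W_m, 1} e^{W_m} ∏_{i=1}^{m-1} M_i²`. -/
def Gconst (w : ℕ → ℝ) (m : ℕ) : ℝ :=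
  2 * m * max (Wseq w m) 1 * Real.exp (Wseq w m) * ∏ i ∈ Finset.Icc 1 (m - 1), (Mseq w i) ^ 2

/-- Value of the underlying at a node with (real) time index `i`, `j` up Brownian moves and
net jump level `l`. -/
def Sval (S0 σ dt h : ℝ) (i : ℝ) (j : ℕ) (l : ℤ) : ℝ :=
  S0 * Real.exp ((2 * (j : ℝ) - i) * (σ * Real.sqrt dt) + (l : ℝ) * h)

/-- Full backward European put price; `VEfull … d j l` is the value `V_E(n-d, j, l)`
(`d` = number of remaining steps). -/
def VEfull (n m : ℕ) (q : ℤ → ℝ) (p dt S0 K σ h r : ℝ) : ℕ → ℕ → ℤ → ℝ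
  | 0, j, l => max (K - Sval S0 σ dt h (n : ℝ) j l) 0
  | (d + 1), j, l =>
      Real.exp (-(r * dt)) *
        ∑ k ∈ Finset.Icc (-(m : ℤ)) (m : ℤ),
          (VEfull n m q p dt S0 K σ h r d (j + 1) (l + k) * p +
            VEfull n m q p dt S0 K σ h r d j (l + k) * (1 - p)) * q k

/-- Full backward American put price; `VAfull … d j l` is the value `V_A(n-d, j, l)`. -/
def VAfull (n m : ℕ) (q : ℤ → ℝ) (p dt S0 K σ h r : ℝ) : ℕ → ℕ → ℤ → ℝ
  | 0, j, l => max (K - Sval S0 σ dt h (n : ℝ) j l) 0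
  | (d + 1), j, l =>
      max
        (Real.exp (-(r * dt)) *
          ∑ k ∈ Finset.Icc (-(m : ℤ)) (m : ℤ),
            (VAfull n m q p dt S0 K σ h r d (j + 1) (l + k) * p +
              VAfull n m q p dt S0 K σ h r d j (l + k) * (1 - p)) * q k)
        (K - Sval S0 σ dt h ((n : ℝ) - (d + 1)) j l)

/-- Truncated backward European put price with boundary value `b`;
`VEtr … d j l` is the value `V_E^b(n-d, j, l)`. -/
def VEtr (n m : ℕ) (q : ℤ → ℝ) (p dt S0 K σ h r b : ℝ) (kbar lbar : ℕ) :
    ℕ → ℕ → ℤ → ℝ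
  | 0, j, l =>
      if -(lbar : ℤ) ≤ l ∧ l ≤ (kbar : ℤ) then max (K - Sval S0 σ dt h (n : ℝ) j l) 0 else b
  | (d + 1), j, l =>
      if -(lbar : ℤ) ≤ l ∧ l ≤ (kbar : ℤ) then
        Real.exp (-(r * dt)) *
          ∑ k ∈ Finset.Icc (-(m : ℤ)) (m : ℤ),
            (VEtr n m q p dt S0 K σ h r b kbar lbar d (j + 1) (l + k) * p +
              VEtr n m q p dt S0 K σ h r b kbar lbar d j (l + k) * (1 - p)) * q k
      else b

/-- Truncated backward American put price with boundary value `b`;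
`VAtr … d j l` is the value `V_A^b(n-d, j, l)`. -/
def VAtr (n m : ℕ) (q : ℤ → ℝ) (p dt S0 K σ h r b : ℝ) (kbar lbar : ℕ) :
    ℕ → ℕ → ℤ → ℝ
  | 0, j, l =>
      if -(lbar : ℤ) ≤ l ∧ l ≤ (kbar : ℤ) then max (K - Sval S0 σ dt h (n : ℝ) j l) 0 else b
  | (d + 1), j, l =>
      if -(lbar : ℤ) ≤ l ∧ l ≤ (kbar : ℤ) then
        max
          (Real.exp (-(r * dt)) *
            ∑ k ∈ Finset.Icc (-(m : ℤ)) (m : ℤ),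
              (VAtr n m q p dt S0 K σ h r b kbar lbar d (j + 1) (l + k) * p +
                VAtr n m q p dt S0 K σ h r b kbar lbar d j (l + k) * (1 - p)) * q k)
          (K - Sval S0 σ dt h ((n : ℝ) - (d + 1)) j l)
      else b

/-- The sum, over all jump-path prefixes that first exit the band `[-l̄, k̄]` at some time
`1 ≤ i ≤ n`, of the prefix probability times `b e^{-r i Δt}`. -/
def exitSum (n m : ℕ) (q : ℤ → ℝ) (r dt : ℝ) (kbar lbar : ℕ) (b : ℝ) : ℝ :=
  ∑ i ∈ Finset.Icc 1 n,
    ∑ y ∈ (paths i m).filter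
        (fun y =>
          (∀ t < i, -(lbar : ℤ) ≤ levelAt i y t ∧ levelAt i y t ≤ (kbar : ℤ)) ∧
          ¬(-(lbar : ℤ) ≤ levelAt i y i ∧ levelAt i y i ≤ (kbar : ℤ))),
      pathWeight i q y * (b * Real.exp (-(r * (i : ℝ) * dt)))

end HScut

open HScut

/-!
Splitting a path into its positive and negative parts bounds `q̃⁽ⁿ⁾(k)` by `∑_ℓ c(k+ℓ) c(ℓ)`,
where `c(j)` is the coefficient of `x ^ j` in `(1 + ∑_{i ≤ m} (w_i / n) x ^ i) ^ n`. As
`C(n, a) ≤ n ^ a / a!`, `c(j)` is at most the coefficient of `x ^ j` in `exp (∑_{i ≤ m} w_i x ^ i)`.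
Adding the jump sizes one at a time, the latter is at most `∏_{i < p} M_i · W_p^⌊j/p⌋ / ⌊j/p⌋!` for
jump sizes `≤ p`: the binomial theorem merges `w_{p+1}` and `W_p^{(p+1)/p}` into `W_{p+1}`, and
`M_p` absorbs the rounding of `⌊j/p⌋ (p+1)/p` to `⌊j/(p+1)⌋`. Finally, once
`⌊k/m⌋ ≥ 2 W_m - 1` the ratios `W_m / (A + 1)` are at most `1/2` for `A ≥ ⌊k/m⌋`, so the sum over
`ℓ` costs a factor `m e^{W_m/2} ∏ M_i² ≤ G`.
-/

open Polynomial
open scoped Nat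

theorem Real.rpow_le_max_rpow {W a b δ : ℝ} (hW : 0 < W) (ha : a ≤ δ) (hb : δ ≤ b) :
    W ^ δ ≤ max (W ^ b) (W ^ a) := by
  rcases le_or_gt 1 W with h | h
  · exact le_max_of_le_left (Real.rpow_le_rpow_of_exponent_le h hb)
  · exact le_max_of_le_right (Real.rpow_le_rpow_of_exponent_ge hW h.le ha)

theorem add_pow_div_factorial (x y : ℝ) (t : ℕ) :
    (x + y) ^ t / t ! = ∑ a ∈ range (t + 1), x ^ a / a ! * (y ^ (t - a) / (t - a)!) := by
  rw [add_pow, sum_div]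
  refine sum_congr rfl fun a ha => ?_
  rw [Nat.cast_choose ℝ (Nat.lt_succ_iff.mp (mem_range.mp ha))]
  field_simp

theorem pow_div_factorial_le_max_mul {W : ℝ} (hW : 0 < W) {p : ℕ} (hp : 0 < p) (x : ℕ) :
    W ^ (x / p) / (x / p)! ≤
      max W (W ^ ((1 - (p : ℝ)) / p)) *
        ((W ^ (((p : ℝ) + 1) / p)) ^ (x / (p + 1)) / (x / (p + 1))!) := by
  -- `p ⌊x/p⌋` and `(p + 1) ⌊x/(p+1)⌋` both lie within `p` of `x`, so `δ ∈ [(1 - p)/p, 1]`.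
  have hs : x + 1 ≤ p * (x / p) + p ∧ p * (x / p) ≤ x := by
    have := Nat.div_add_mod x p; have := Nat.mod_lt x hp; constructor <;> omega
  have hu : x ≤ (p + 1) * (x / (p + 1)) + p ∧ (p + 1) * (x / (p + 1)) ≤ x := by
    have := Nat.div_add_mod x (p + 1); have := Nat.mod_lt x (by omega : 0 < p + 1)
    constructor <;> omega
  have hfac : ((x / (p + 1))! : ℝ) ≤ (x / p)! := by
    exact_mod_cast Nat.factorial_le (Nat.div_le_div_left p.le_succ hp)
  set s := x / p
  set u := x / (p + 1)
  set δ : ℝ := s - ((p : ℝ) + 1) / p * u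
  have hp' : (0 : ℝ) < p := by exact_mod_cast hp
  have hpδ : p * δ = p * s - (p + 1) * u := by simp only [δ]; field_simp
  have hs' : (x : ℝ) + 1 ≤ p * s + p ∧ (p * s : ℝ) ≤ x := by exact_mod_cast hs
  have hu' : (x : ℝ) ≤ (p + 1) * u + p ∧ ((p + 1) * u : ℝ) ≤ x := by exact_mod_cast hu
  have hδ : W ^ δ ≤ max W (W ^ ((1 - (p : ℝ)) / p)) := by
    have hlo : (1 - (p : ℝ)) / p ≤ δ := by rw [div_le_iff₀ hp']; linarith
    have hhi : δ ≤ 1 := le_of_mul_le_mul_left (by linarith : p * δ ≤ p * 1) hp'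
    simpa only [Real.rpow_one] using Real.rpow_le_max_rpow hW hlo hhi
  have hsplit : W ^ s = W ^ δ * (W ^ (((p : ℝ) + 1) / p)) ^ u := by
    rw [← Real.rpow_natCast, ← Real.rpow_natCast, ← Real.rpow_mul hW.le, ← Real.rpow_add hW]
    simp only [δ]; ring_nf
  rw [hsplit, mul_div_assoc]
  gcongr

theorem pow_div_factorial_le_half_pow {W : ℝ} (hW : 0 ≤ W) {j A : ℕ} (hj : 2 * W ≤ j + 1)
    (hA : j ≤ A) : W ^ A / A ! ≤ (1 / 2) ^ (A - j) * (W ^ j / j !) := by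
  obtain ⟨d, rfl⟩ := Nat.exists_eq_add_of_le hA
  have hfac : (j ! * (j + 1) ^ d : ℝ) ≤ (j + d)! := by
    exact_mod_cast Nat.factorial_mul_pow_le_factorial
  have hj1 : (0 : ℝ) < j + 1 := by positivity
  calc W ^ (j + d) / (j + d)! ≤ W ^ (j + d) / (j ! * (j + 1) ^ d) := by gcongr
    _ = (W / (j + 1)) ^ d * (W ^ j / j !) := by rw [div_pow, pow_add]; field_simp
    _ ≤ (1 / 2) ^ (j + d - j) * (W ^ j / j !) := by
      have hhalf : W / (j + 1) ≤ 1 / 2 := by rw [div_le_iff₀ hj1]; linarith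
      rw [Nat.add_sub_cancel_left]
      exact mul_le_mul_of_nonneg_right (pow_le_pow_left₀ (by positivity) hhalf d) (by positivity)

theorem sum_range_comp_div_le {f : ℕ → ℝ} (hf : ∀ u, 0 ≤ f u) {m : ℕ} (hm : 0 < m) (L : ℕ) :
    ∑ ℓ ∈ range L, f (ℓ / m) ≤ m * ∑ u ∈ range L, f u := by
  rw [← sum_fiberwise_of_maps_to (g := (· / m)) (t := range L)
    fun ℓ hℓ => mem_range.mpr ((Nat.div_le_self ℓ m).trans_lt (mem_range.mp hℓ)), mul_sum]
  refine sum_le_sum fun u _ => ?_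
  rw [sum_congr rfl fun ℓ hℓ => by rw [(mem_filter.mp hℓ).2], sum_const, nsmul_eq_mul]
  gcongr
  · exact hf u
  · calc #{ℓ ∈ range L | ℓ / m = u} ≤ #(Ico (m * u) (m * u + m)) := by
          refine card_le_card fun ℓ hℓ => ?_
          obtain rfl := (mem_filter.mp hℓ).2
          have := Nat.div_add_mod ℓ m
          have := Nat.mod_lt ℓ hm
          rw [mem_Ico]
          omega
      _ = m := by simp

theorem sum_mul_le_of_le_pow_div_factorial {c : ℕ → ℝ} {B W : ℝ} {m k : ℕ} (hm : 0 < m)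
    (hc0 : ∀ j, 0 ≤ c j) (hc : ∀ j, c j ≤ B * (W ^ (j / m) / (j / m)!)) (hW : 0 ≤ W)
    (hk : 2 * W ≤ (k / m : ℕ) + 1) (L : ℕ) :
    ∑ ℓ ∈ range L, c (k + ℓ) * c ℓ ≤ m * Real.exp (W / 2) * B ^ 2 * (W ^ (k / m) / (k / m)!) := by
  have hB : 0 ≤ B := by simpa using (hc0 0).trans (hc 0)
  set E := W ^ (k / m) / (k / m)!
  have hterm (ℓ : ℕ) : c (k + ℓ) * c ℓ ≤ B ^ 2 * E * ((W / 2) ^ (ℓ / m) / (ℓ / m)!) := by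
    have hA : k / m + ℓ / m ≤ (k + ℓ) / m := Nat.div_add_div_le_add_div
    have hhead : c (k + ℓ) ≤ B * ((1 / 2) ^ (ℓ / m) * E) := by
      refine (hc _).trans (mul_le_mul_of_nonneg_left ?_ hB)
      refine (pow_div_factorial_le_half_pow hW hk ((Nat.le_add_right _ _).trans hA)).trans ?_
      have hhalf := pow_le_pow_of_le_one (by norm_num : (0 : ℝ) ≤ 1 / 2) (by norm_num)
        (le_tsub_of_add_le_left hA)
      exact mul_le_mul_of_nonneg_right hhalf (by positivity)
    calc c (k + ℓ) * c ℓ ≤ B * ((1 / 2) ^ (ℓ / m) * E) * (B * (W ^ (ℓ / m) / (ℓ / m)!)) :=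
          mul_le_mul hhead (hc ℓ) (hc0 ℓ) (by positivity)
      _ = B ^ 2 * E * ((W / 2) ^ (ℓ / m) / (ℓ / m)!) := by simp only [div_pow, one_pow]; ring
  calc ∑ ℓ ∈ range L, c (k + ℓ) * c ℓ
      ≤ B ^ 2 * E * ∑ ℓ ∈ range L, (W / 2) ^ (ℓ / m) / (ℓ / m)! := by
        rw [mul_sum]; exact sum_le_sum fun ℓ _ => hterm ℓ
    _ ≤ B ^ 2 * E * (m * ∑ u ∈ range L, (W / 2) ^ u / u !) := by
        gcongr
        exact sum_range_comp_div_le (f := fun u => (W / 2) ^ u / u !) (fun u => by positivity) hm L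
    _ ≤ B ^ 2 * E * (m * Real.exp (W / 2)) := by
        gcongr; exact Real.sum_le_exp_of_nonneg (by positivity) L
    _ = m * Real.exp (W / 2) * B ^ 2 * E := by ring

theorem le_natCast_div_of_mul_ceil_le {x : ℝ} {m k : ℕ} (hm : 0 < m) (h : (m : ℤ) * ⌈x⌉ ≤ k) :
    x ≤ (k / m : ℕ) := by
  have : ⌈x⌉ ≤ ((k / m : ℕ) : ℤ) := by
    rw [Int.natCast_div, Int.le_ediv_iff_mul_le (by exact_mod_cast hm), mul_comm]
    exact h
  have hcast : ((⌈x⌉ : ℤ) : ℝ) ≤ (((k / m : ℕ) : ℤ) : ℝ) := Int.cast_le.mpr this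
  rw [Int.cast_natCast] at hcast
  exact (Int.le_ceil x).trans hcast

namespace Polynomial

theorem coeff_sum_C_mul_X_pow_pow {R : Type*} [CommSemiring R] (T : Finset ℕ) (f : ℕ → R)
    (n j : ℕ) : ((∑ v ∈ T, C (f v) * X ^ v) ^ n).coeff j =
      ∑ u ∈ Fintype.piFinset (fun _ : Fin n => T) with ∑ t, u t = j, ∏ t, f (u t) := by
  rw [← Fin.prod_const, prod_univ_sum, finsetSum_coeff, sum_filter]
  refine sum_congr rfl fun u _ => ?_
  rw [prod_mul_distrib, ← map_prod, prod_pow_eq_pow_sum, coeff_C_mul_X_pow]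
  simp only [eq_comm]

theorem coeff_C_mul_X_pow_pow_mul_mul_natCast (r : ℝ) (c a b : ℕ) (Q : ℝ[X]) (j : ℕ) :
    ((C r * X ^ c) ^ a * Q * (b : ℝ[X])).coeff j =
      b * r ^ a * if c * a ≤ j then Q.coeff (j - c * a) else 0 := by
  rw [← C_eq_natCast, ← coeff_X_pow_mul', ← coeff_C_mul,
    show (C r * X ^ c) ^ a * Q * C (b : ℝ) = C (b * r ^ a) * (X ^ (c * a) * Q) by
      rw [map_mul, C_pow, mul_pow, pow_mul]; ring]

end Polynomial

namespace HScut

/-- `expCoeff w p j` is the coefficient of `x ^ j` in `exp (∑_{i=1}^p w i * x ^ i)`. -/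
def expCoeff (w : ℕ → ℝ) : ℕ → ℕ → ℝ
  | 0, j => if j = 0 then 1 else 0
  | p + 1, j => ∑ a ∈ range (j / (p + 1) + 1),
      w (p + 1) ^ a / a ! * expCoeff w p (j - (p + 1) * a)

section ExpCoeff

variable {w : ℕ → ℝ}

theorem expCoeff_nonneg {p : ℕ} (hw : ∀ i, 0 < i → i ≤ p → 0 ≤ w i) (j : ℕ) :
    0 ≤ expCoeff w p j := by
  induction p generalizing j with
  | zero => unfold expCoeff; positivity
  | succ p ih =>
    have := hw (p + 1) p.succ_pos le_rfl
    exact sum_nonneg fun a _ =>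
      mul_nonneg (by positivity) (ih (fun i hi hip => hw i hi (by omega)) _)

theorem expCoeff_one (j : ℕ) : expCoeff w 1 j = w 1 ^ j / j ! := by
  rw [expCoeff, Nat.div_one, sum_eq_single_of_mem j (self_mem_range_succ j)]
  · simp [expCoeff]
  · intro a ha hne
    have : j - a ≠ 0 := by have := mem_range.mp ha; omega
    simp [expCoeff, this]

theorem Wseq_succ_of_pos {p : ℕ} (hp : 0 < p) :
    Wseq w (p + 1) = w (p + 1) + Wseq w p ^ (((p : ℝ) + 1) / p) := by
  obtain ⟨_, rfl⟩ := Nat.exists_eq_add_of_le' hp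
  rw [Wseq]
  push_cast
  ring_nf

theorem Wseq_pos (h1 : 0 < w 1) {p : ℕ} (hp : 0 < p) (hw : ∀ i, 0 < i → i ≤ p → 0 ≤ w i) :
    0 < Wseq w p := by
  induction p, hp using Nat.le_induction with
  | base => exact h1
  | succ p hp ih =>
    rw [Wseq_succ_of_pos hp]
    have := Real.rpow_pos_of_pos (ih fun i hi hip => hw i hi (by omega)) (((p : ℝ) + 1) / p)
    linarith [hw (p + 1) p.succ_pos le_rfl]

theorem prod_Mseq_nonneg (h1 : 0 < w 1) {p : ℕ} (hw : ∀ i, 0 < i → i ≤ p → 0 ≤ w i) :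
    0 ≤ ∏ i ∈ Icc 1 p, Mseq w i :=
  prod_nonneg fun _ hi => le_max_of_le_left
    (Wseq_pos h1 (mem_Icc.mp hi).1 fun j hj hji => hw j hj (hji.trans (mem_Icc.mp hi).2)).le

theorem expCoeff_le (h1 : 0 < w 1) {p : ℕ} (hp : 0 < p) (hw : ∀ i, 0 < i → i ≤ p → 0 ≤ w i)
    (j : ℕ) :
    expCoeff w p j ≤ (∏ i ∈ Icc 1 (p - 1), Mseq w i) * (Wseq w p ^ (j / p) / (j / p)!) := by
  induction p, hp using Nat.le_induction generalizing j with
  | base => simp [expCoeff_one, Wseq]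
  | succ p hp ih =>
    have hw' : ∀ i, 0 < i → i ≤ p → 0 ≤ w i := fun i hi hip => hw i hi (by omega)
    have hW := Wseq_pos h1 hp hw'
    have hPM := prod_Mseq_nonneg h1 (p := p - 1) fun i hi hip => hw' i hi (by omega)
    have hwp := hw (p + 1) p.succ_pos le_rfl
    set X := Wseq w p ^ (((p : ℝ) + 1) / p)
    set t := j / (p + 1)
    set PM := ∏ i ∈ Icc 1 (p - 1), Mseq w i
    calc expCoeff w (p + 1) j
        = ∑ a ∈ range (t + 1), w (p + 1) ^ a / a ! * expCoeff w p (j - (p + 1) * a) := rfl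
      _ ≤ ∑ a ∈ range (t + 1),
            w (p + 1) ^ a / a ! * (PM * (Mseq w p * (X ^ (t - a) / (t - a)!))) := by
        gcongr with a
        refine (ih hw' _).trans (mul_le_mul_of_nonneg_left ?_ hPM)
        rw [← Nat.sub_mul_div]
        exact pow_div_factorial_le_max_mul hW hp _
      _ = PM * Mseq w p * ((w (p + 1) + X) ^ t / t !) := by
        rw [add_pow_div_factorial, mul_sum]
        exact sum_congr rfl fun a _ => by ring
      _ = (∏ i ∈ Icc 1 (p + 1 - 1), Mseq w i) * (Wseq w (p + 1) ^ t / t !) := by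
        obtain ⟨_, rfl⟩ := Nat.exists_eq_add_of_le' hp
        rw [Wseq_succ_of_pos hp, Nat.add_sub_cancel, prod_Icc_succ_top (by omega)]
        rfl

theorem mul_exp_half_mul_sq_le_Gconst {m : ℕ} (hW : 0 ≤ Wseq w m) :
    m * Real.exp (Wseq w m / 2) * (∏ i ∈ Icc 1 (m - 1), Mseq w i) ^ 2 ≤ Gconst w m := by
  have hexp : Real.exp (Wseq w m / 2) ≤ Real.exp (Wseq w m) := Real.exp_le_exp.mpr (by linarith)
  have hmax : 1 ≤ 2 * max (Wseq w m) 1 := by linarith [le_max_right (Wseq w m) 1]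
  rw [Gconst, ← prod_pow]
  calc m * Real.exp (Wseq w m / 2) * ∏ i ∈ Icc 1 (m - 1), Mseq w i ^ 2
      ≤ 1 * (m * Real.exp (Wseq w m) * ∏ i ∈ Icc 1 (m - 1), Mseq w i ^ 2) := by
        rw [one_mul]; gcongr
    _ ≤ 2 * max (Wseq w m) 1 * (m * Real.exp (Wseq w m) * ∏ i ∈ Icc 1 (m - 1), Mseq w i ^ 2) := by
        gcongr
    _ = _ := by ring

end ExpCoeff

/-- One step of a path with jumps in `{0, …, p}`, the jump `v` having rate `ρ v`. -/
def jumpPoly (ρ : ℕ → ℝ) (p : ℕ) : ℝ[X] :=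
  ∑ v ∈ range (p + 1), C (ρ v) * X ^ v

theorem coeff_jumpPoly_pow_nonneg {ρ : ℕ → ℝ} {p : ℕ} (hρ : ∀ i ≤ p, 0 ≤ ρ i) (N j : ℕ) :
    0 ≤ (jumpPoly ρ p ^ N).coeff j := by
  rw [jumpPoly, coeff_sum_C_mul_X_pow_pow]
  exact sum_nonneg fun u hu => prod_nonneg fun t _ =>
    hρ _ (Nat.lt_succ_iff.mp (mem_range.mp (Fintype.mem_piFinset.mp (mem_filter.mp hu).1 t)))

theorem coeff_jumpPoly_pow_le_expCoeff {ρ w : ℕ → ℝ} {p N : ℕ} (hρ : ∀ i ≤ p, 0 ≤ ρ i)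
    (hρ0 : ρ 0 ≤ 1) (hw : ∀ i, 0 < i → i ≤ p → N * ρ i ≤ w i) (j : ℕ) :
    (jumpPoly ρ p ^ N).coeff j ≤ expCoeff w p j := by
  induction p generalizing N j with
  | zero =>
    simp only [jumpPoly, zero_add, range_one, sum_singleton, pow_zero, mul_one, ← C_pow, coeff_C,
      expCoeff]
    split_ifs
    exacts [pow_le_one₀ (hρ 0 le_rfl) hρ0, le_rfl]
  | succ p ih =>
    have hρ' : ∀ i ≤ p, 0 ≤ ρ i := fun i hi => hρ i (by omega)
    have hρp := hρ (p + 1) le_rfl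
    have hwp : 0 ≤ w (p + 1) := (mul_nonneg N.cast_nonneg hρp).trans (hw _ p.succ_pos le_rfl)
    have hw' : ∀ i, 0 < i → i ≤ p → 0 ≤ w i := fun i hi hip =>
      (mul_nonneg N.cast_nonneg (hρ' i hip)).trans (hw i hi (by omega))
    have hcoef (a : ℕ) : (N.choose a : ℝ) * ρ (p + 1) ^ a ≤ w (p + 1) ^ a / a ! :=
      calc (N.choose a : ℝ) * ρ (p + 1) ^ a ≤ N ^ a / a ! * ρ (p + 1) ^ a := by
            gcongr; exact Nat.choose_le_pow_div a N
        _ = (N * ρ (p + 1)) ^ a / a ! := by ring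
        _ ≤ w (p + 1) ^ a / a ! := by gcongr; exact hw _ p.succ_pos le_rfl
    have hsub : {a ∈ range (N + 1) | (p + 1) * a ≤ j} ⊆ range (j / (p + 1) + 1) := fun a ha => by
      rw [mem_range, Nat.lt_succ_iff, Nat.le_div_iff_mul_le p.succ_pos, mul_comm]
      exact (mem_filter.mp ha).2
    rw [jumpPoly, sum_range_succ, ← jumpPoly, add_comm, add_pow, finsetSum_coeff]
    simp only [coeff_C_mul_X_pow_pow_mul_mul_natCast, mul_ite, mul_zero]
    rw [← sum_filter]
    calc ∑ a ∈ range (N + 1) with (p + 1) * a ≤ j,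
          N.choose a * ρ (p + 1) ^ a * (jumpPoly ρ p ^ (N - a)).coeff (j - (p + 1) * a)
        ≤ ∑ a ∈ range (N + 1) with (p + 1) * a ≤ j,
          w (p + 1) ^ a / a ! * expCoeff w p (j - (p + 1) * a) := by
          refine sum_le_sum fun a _ => ?_
          have hIH := ih (N := N - a) hρ' (fun i hi hip => ?_) (j - (p + 1) * a)
          · exact (mul_le_mul_of_nonneg_left hIH (by positivity)).trans
              (mul_le_mul_of_nonneg_right (hcoef a) (expCoeff_nonneg hw' _))
          · calc ((N - a : ℕ) : ℝ) * ρ i ≤ N * ρ i := by gcongr; exacts [hρ' i hip, by omega]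
              _ ≤ w i := hw i hi (by omega)
      _ ≤ expCoeff w (p + 1) j :=
          sum_le_sum_of_subset_of_nonneg hsub fun a _ _ =>
            mul_nonneg (by positivity) (expCoeff_nonneg hw' _)

theorem sum_coeff_jumpPoly_pow_mul_eq (ρ : ℕ → ℝ) (m n k : ℕ) :
    ∑ ℓ ∈ range (m * n + 1), (jumpPoly ρ m ^ n).coeff (k + ℓ) * (jumpPoly ρ m ^ n).coeff ℓ =
      ∑ x ∈ (Fintype.piFinset fun _ : Fin n => range (m + 1)) ×ˢ
          (Fintype.piFinset fun _ : Fin n => range (m + 1)) with ∑ t, x.1 t = k + ∑ t, x.2 t,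
        (∏ t, ρ (x.1 t)) * ∏ t, ρ (x.2 t) := by
  set U := Fintype.piFinset fun _ : Fin n => range (m + 1)
  have hfib : ∀ u ∈ U, ∑ t, u t ∈ range (m * n + 1) := fun u hu => by
    rw [mem_range, Nat.lt_succ_iff]
    calc ∑ t, u t ≤ ∑ _t : Fin n, m :=
          sum_le_sum fun t _ => Nat.lt_succ_iff.mp (mem_range.mp (Fintype.mem_piFinset.mp hu t))
      _ = m * n := by simp [mul_comm]
  simp only [jumpPoly, coeff_sum_C_mul_X_pow_pow]
  symm
  calc _ = ∑ u' ∈ U, (∑ u ∈ U with ∑ t, u t = k + ∑ t, u' t, ∏ t, ρ (u t)) * ∏ t, ρ (u' t) := by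
        rw [sum_filter, sum_product_right]
        simp only [sum_mul, sum_filter, ite_mul, zero_mul]
    _ = ∑ ℓ ∈ range (m * n + 1), ∑ u' ∈ U with ∑ t, u' t = ℓ,
          (∑ u ∈ U with ∑ t, u t = k + ∑ t, u' t, ∏ t, ρ (u t)) * ∏ t, ρ (u' t) :=
        (sum_fiberwise_of_maps_to hfib _).symm
    _ = _ := by
        refine sum_congr rfl fun ℓ _ => ?_
        rw [mul_sum]
        exact sum_congr rfl fun u' hu' => by rw [(mem_filter.mp hu').2]

/-- Rate of a jump of size `±i`; the zero jump gets `1 ≥ q 0`, so that the positive and the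
negative part of a path can both carry it. -/
def oneSidedRate (q : ℤ → ℝ) (i : ℕ) : ℝ :=
  if i = 0 then 1 else max (q i) (q (-i))

theorem modWeight_factor_le_oneSidedRate_mul {q : ℤ → ℝ} (hq0 : q 0 ≤ 1) (v : ℤ) :
    (if v = 0 then q 0 else max (q v) (q (-v))) ≤
      oneSidedRate q v.toNat * oneSidedRate q (-v).toNat := by
  obtain ⟨i, rfl | rfl⟩ := Int.eq_nat_or_neg v <;> rcases eq_or_ne i 0 with rfl | hi
  · simp [oneSidedRate, hq0]
  · simp [oneSidedRate, hi]
  · simp [oneSidedRate, hq0]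
  · simp [oneSidedRate, hi, max_comm]

theorem oneSidedRate_nonneg {q : ℤ → ℝ} {m : ℕ} (hq : ∀ l : ℤ, -(m : ℤ) ≤ l → l ≤ m → 0 ≤ q l)
    {i : ℕ} (hi : i ≤ m) : 0 ≤ oneSidedRate q i := by
  unfold oneSidedRate
  split_ifs
  exacts [zero_le_one, le_max_of_le_left (hq _ (by omega) (by omega))]

theorem levelAt_self {n : ℕ} (s : Fin n → ℤ) : levelAt n s n = ∑ t, s t := by
  rw [levelAt, filter_true_of_mem fun t _ => t.isLt]

theorem mem_paths_iff {n m : ℕ} {s : Fin n → ℤ} :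
    s ∈ paths n m ↔ ∀ t, -(m : ℤ) ≤ s t ∧ s t ≤ m := by
  simp [paths]

theorem sum_toNat_eq_of_levelAt_eq {n : ℕ} {s : Fin n → ℤ} {k : ℕ} (hk : levelAt n s n = k) :
    ∑ t, (s t).toNat = k + ∑ t, (-s t).toNat := by
  have : ∑ t, ((s t).toNat : ℤ) = k + ∑ t, ((-s t).toNat : ℤ) := by
    rw [← hk, levelAt_self]
    refine eq_add_of_sub_eq ?_
    simp only [← sum_sub_distrib, Int.toNat_sub_toNat_neg]
  exact_mod_cast this

theorem qtilde_le_sum_parts {n m : ℕ} {q : ℤ → ℝ}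
    (hq : ∀ l : ℤ, -(m : ℤ) ≤ l → l ≤ m → 0 ≤ q l) (hq0 : q 0 ≤ 1) (k : ℕ) :
    qtilde n m q k ≤
      ∑ x ∈ (Fintype.piFinset fun _ : Fin n => range (m + 1)) ×ˢ
          (Fintype.piFinset fun _ : Fin n => range (m + 1)) with ∑ t, x.1 t = k + ∑ t, x.2 t,
        (∏ t, oneSidedRate q (x.1 t)) * ∏ t, oneSidedRate q (x.2 t) := by
  set S := {s ∈ paths n m | levelAt n s n = k}
  let parts (s : Fin n → ℤ) : (Fin n → ℕ) × (Fin n → ℕ) :=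
    (fun t => (s t).toNat, fun t => (-s t).toNat)
  let wt (x : (Fin n → ℕ) × (Fin n → ℕ)) : ℝ :=
    (∏ t, oneSidedRate q (x.1 t)) * ∏ t, oneSidedRate q (x.2 t)
  have hinj : Set.InjOn parts S := fun s _ s' _ h => funext fun t => by
    rw [← Int.toNat_sub_toNat_neg (s t), ← Int.toNat_sub_toNat_neg (s' t)]
    simp only [parts, Prod.mk.injEq] at h
    rw [congrFun h.1 t, congrFun h.2 t]
  calc qtilde n m q k = ∑ s ∈ S, modWeight n q s := rfl
    _ ≤ ∑ s ∈ S, wt (parts s) := by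
        refine sum_le_sum fun s hs => ?_
        simp only [modWeight, wt, parts, ← prod_mul_distrib]
        refine prod_le_prod (fun t _ => ?_) fun t _ => modWeight_factor_le_oneSidedRate_mul hq0 (s t)
        have := mem_paths_iff.mp (mem_filter.mp hs).1 t
        split_ifs
        exacts [hq 0 (by omega) (by omega), le_max_of_le_left (hq _ this.1 this.2)]
    _ = ∑ x ∈ S.image parts, wt x := (sum_image hinj).symm
    _ ≤ _ := by
        refine sum_le_sum_of_subset_of_nonneg (image_subset_iff.mpr fun s hs => ?_)
          fun x hx _ => ?_
        · obtain ⟨hs, hk⟩ := mem_filter.mp hs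
          simp only [mem_filter, mem_product, Fintype.mem_piFinset, mem_range, parts]
          refine ⟨⟨fun t => ?_, fun t => ?_⟩, sum_toNat_eq_of_levelAt_eq hk⟩ <;>
            have := mem_paths_iff.mp hs t <;> omega
        · simp only [mem_filter, mem_product, Fintype.mem_piFinset, mem_range] at hx
          exact mul_nonneg (prod_nonneg fun t _ => oneSidedRate_nonneg hq (by linarith [hx.1.1 t]))
            (prod_nonneg fun t _ => oneSidedRate_nonneg hq (by linarith [hx.1.2 t]))

end HScut

theorem qtilde_pointwise_bound_general_general (n m : ℕ) (hn : 1 ≤ n) (hm : 1 ≤ m) (q : ℤ → ℝ)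
    (hq : ∀ l : ℤ, -(m : ℤ) ≤ l → l ≤ (m : ℤ) → 0 ≤ q l)
    (hsum : ∑ l ∈ Finset.Icc (-(m : ℤ)) (m : ℤ), q l = 1)
    (hq1 : 0 < max (q 1) (q (-1)))
    (wf : ℕ → ℝ) (hwf : ∀ i : ℕ, wf i = (n : ℝ) * max (q (i : ℤ)) (q (-(i : ℤ))))
    (k : ℕ) (hk1 : (m : ℤ) * ⌈2 * Wseq wf m - 1⌉ ≤ (k : ℤ)) :
    qtilde n m q (k : ℤ) ≤
      Gconst wf m * Wseq wf m ^ (k / m) / (Nat.factorial (k / m) : ℝ) := by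
  have hq0 : q 0 ≤ 1 := hsum ▸ single_le_sum (fun l hl => hq l (mem_Icc.mp hl).1 (mem_Icc.mp hl).2)
    (mem_Icc.mpr ⟨by omega, by omega⟩)
  have hρ (i : ℕ) (hi : i ≤ m) := oneSidedRate_nonneg hq hi
  have hρw (i : ℕ) (hi : 0 < i) (_ : i ≤ m) : n * oneSidedRate q i ≤ wf i := by
    simp [oneSidedRate, hi.ne', hwf]
  have hw (i : ℕ) (hi : 0 < i) (him : i ≤ m) : 0 ≤ wf i :=
    (mul_nonneg n.cast_nonneg (hρ i him)).trans (hρw i hi him)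
  have h1 : 0 < wf 1 := by rw [hwf]; exact mul_pos (by exact_mod_cast hn) (by simpa using hq1)
  have hW : 0 ≤ Wseq wf m := (Wseq_pos h1 hm hw).le
  have h2W : 2 * Wseq wf m ≤ (k / m : ℕ) + 1 := by
    linarith [le_natCast_div_of_mul_ceil_le hm hk1]
  calc qtilde n m q k
      ≤ ∑ ℓ ∈ range (m * n + 1), (jumpPoly (oneSidedRate q) m ^ n).coeff (k + ℓ) *
          (jumpPoly (oneSidedRate q) m ^ n).coeff ℓ :=
        (qtilde_le_sum_parts hq hq0 k).trans_eq (sum_coeff_jumpPoly_pow_mul_eq _ m n k).symm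
    _ ≤ m * Real.exp (Wseq wf m / 2) * (∏ i ∈ Icc 1 (m - 1), Mseq wf i) ^ 2 *
          (Wseq wf m ^ (k / m) / (Nat.factorial (k / m) : ℝ)) :=
        sum_mul_le_of_le_pow_div_factorial hm (coeff_jumpPoly_pow_nonneg hρ n)
          (fun j => (coeff_jumpPoly_pow_le_expCoeff hρ (by simp [oneSidedRate]) hρw j).trans
            (expCoeff_le h1 hm hw j))
          hW h2W _
    _ ≤ Gconst wf m * Wseq wf m ^ (k / m) / (Nat.factorial (k / m) : ℝ) := by
        rw [mul_div_assoc]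
        exact mul_le_mul_of_nonneg_right (mul_exp_half_mul_sq_le_Gconst hW) (by positivity)

/-- For every integer `k` with `m ⌈2W_m − 1⌉ ≤ k ≤ m n` one has
`q̃^{(n)}(k) ≤ G · W_m^{⌊k/m⌋} / ⌊k/m⌋!`. -/
theorem qtilde_pointwise_bound_general (n m : ℕ) (hn : 1 ≤ n) (hm : 1 ≤ m) (q : ℤ → ℝ)
    (hq : ∀ l : ℤ, -(m : ℤ) ≤ l → l ≤ (m : ℤ) → 0 ≤ q l)
    (hsum : ∑ l ∈ Finset.Icc (-(m : ℤ)) (m : ℤ), q l = 1)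
    (hq1 : 0 < max (q 1) (q (-1)))
    (wf : ℕ → ℝ) (hwf : ∀ i : ℕ, wf i = (n : ℝ) * max (q (i : ℤ)) (q (-(i : ℤ))))
    (k : ℕ) (hk1 : (m : ℤ) * ⌈2 * Wseq wf m - 1⌉ ≤ (k : ℤ)) (hk2 : k ≤ m * n) :
    qtilde n m q (k : ℤ) ≤
      Gconst wf m * Wseq wf m ^ (k / m) / (Nat.factorial (k / m) : ℝ) :=
  qtilde_pointwise_bound_general_general n m hn hm q hq hsum hq1 wf hwf k hk1
end
end

section
/- Let k̄ and l̄ be nonnegative integers. Then the European put values on the full and on the truncated tree satisfy V − V^{TT} ≤ e^{−rτ}·K·(m+1)·( ∑_{k=k̄+1}^{mn} q̃^{(n)}(k) + ∑_{k=l̄+1}^{mn} q̃^{(n)}(k) ). -/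
/-!
Both prices are sums over jump paths, so `V - V^{TT}` is the discounted payoff summed over
the paths that leave the band `[-l̄, k̄]`. The binomially averaged put payoff is at most `K`, and
`π ≤ π̃`. The modified weight `π̃` has a symmetric step distribution, so by the reflection
principle (negate all jumps after the first time the level reaches `k̄ + 1`) the `π̃`-mass of
the paths that reach `k̄ + 1` is at most twice that of the paths ending above `k̄`; negating
whole paths treats the exits below `-l̄` in the same way. Finally `2 ≤ m + 1`.
-/

open Finset

open scoped Classical

noncomputable section

namespace HScut

section Levels

variable {n m : ℕ}

theorem levelAt_eq_sum_ite (s : Fin n → ℤ) (t : ℕ) :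
    levelAt n s t = ∑ i : Fin n, if (i : ℕ) < t then s i else 0 :=
  Finset.sum_filter _ _

theorem levelAt_neg (s : Fin n → ℤ) (t : ℕ) : levelAt n (-s) t = -levelAt n s t := by
  simp [levelAt, Finset.sum_neg_distrib]

theorem abs_levelAt_le {s : Fin n → ℤ} (hs : s ∈ paths n m) (t : ℕ) :
    |levelAt n s t| ≤ m * n := by
  have hstep : ∀ i, |s i| ≤ m := fun i =>
    abs_le.mpr (Finset.mem_Icc.mp (Fintype.mem_piFinset.mp hs i))
  calc |levelAt n s t| ≤ ∑ i ∈ univ.filter (fun i : Fin n => (i : ℕ) < t), |s i| :=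
        Finset.abs_sum_le_sum_abs _ _
    _ ≤ ∑ i, |s i| :=
        Finset.sum_le_sum_of_subset_of_nonneg (filter_subset _ _) fun _ _ _ => abs_nonneg _
    _ ≤ ∑ _i : Fin n, (m : ℤ) := Finset.sum_le_sum fun i _ => hstep i
    _ = m * n := by simp [mul_comm]

theorem neg_mem_paths {s : Fin n → ℤ} (hs : s ∈ paths n m) : -s ∈ paths n m := by
  simp only [paths, Fintype.mem_piFinset, Finset.mem_Icc, Pi.neg_apply] at hs ⊢
  exact fun i => ⟨by linarith [(hs i).2], by linarith [(hs i).1]⟩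

end Levels

section Reflection

variable {n m : ℕ}

def reflAt (τ : ℕ) (s : Fin n → ℤ) : Fin n → ℤ :=
  fun i => if (i : ℕ) < τ then s i else -s i

theorem reflAt_reflAt (τ : ℕ) (s : Fin n → ℤ) : reflAt τ (reflAt τ s) = s := by
  funext i
  unfold reflAt
  split_ifs <;> simp

theorem reflAt_mem_paths (τ : ℕ) {s : Fin n → ℤ} (hs : s ∈ paths n m) :
    reflAt τ s ∈ paths n m := by
  simp only [paths, Fintype.mem_piFinset, Finset.mem_Icc] at hs ⊢
  intro i
  have := hs i
  unfold reflAt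
  split_ifs <;> omega

theorem levelAt_reflAt_of_le {τ t : ℕ} (h : t ≤ τ) (s : Fin n → ℤ) :
    levelAt n (reflAt τ s) t = levelAt n s t := by
  simp only [levelAt_eq_sum_ite]
  refine Finset.sum_congr rfl fun i _ => ?_
  unfold reflAt
  split_ifs <;> omega

theorem levelAt_reflAt_add_of_le {τ t : ℕ} (h : τ ≤ t) (s : Fin n → ℤ) :
    levelAt n (reflAt τ s) t + levelAt n s t = 2 * levelAt n s τ := by
  simp only [levelAt_eq_sum_ite, ← Finset.sum_add_distrib, Finset.mul_sum]
  refine Finset.sum_congr rfl fun i _ => ?_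
  unfold reflAt
  split_ifs <;> omega

-- `sInf ∅ = 0`: the junk value when the level never reaches `c`.
def hitTime (c : ℤ) (s : Fin n → ℤ) : ℕ :=
  sInf {t | c ≤ levelAt n s t}

def reflect (c : ℤ) (s : Fin n → ℤ) : Fin n → ℤ :=
  reflAt (hitTime c s) s

theorem le_levelAt_hitTime {c : ℤ} {s : Fin n → ℤ} (hs : ∃ t, c ≤ levelAt n s t) :
    c ≤ levelAt n s (hitTime c s) :=
  Nat.sInf_mem hs

theorem hitTime_reflect {c : ℤ} {s : Fin n → ℤ} (hs : ∃ t, c ≤ levelAt n s t) :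
    hitTime c (reflect c s) = hitTime c s := by
  have hhit : c ≤ levelAt n (reflect c s) (hitTime c s) := by
    rw [reflect, levelAt_reflAt_of_le le_rfl]
    exact le_levelAt_hitTime hs
  refine le_antisymm (Nat.sInf_le hhit) (not_lt.mp fun hlt => ?_)
  have hfirst : c ≤ levelAt n s (hitTime c (reflect c s)) := by
    rw [← levelAt_reflAt_of_le hlt.le]
    exact le_levelAt_hitTime ⟨_, hhit⟩
  exact Nat.notMem_of_lt_sInf hlt hfirst

theorem reflect_reflect {c : ℤ} {s : Fin n → ℤ} (hs : ∃ t, c ≤ levelAt n s t) :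
    reflect c (reflect c s) = s := by
  rw [reflect, hitTime_reflect hs, reflect, reflAt_reflAt]

theorem le_levelAt_reflect {c : ℤ} {s : Fin n → ℤ} {t : ℕ} (ht : t ≤ n)
    (hct : c ≤ levelAt n s t) (hend : levelAt n s n < c) :
    c ≤ levelAt n (reflect c s) n := by
  have hτ : hitTime c s ≤ n := (Nat.sInf_le hct).trans ht
  have := levelAt_reflAt_add_of_le hτ s
  have := le_levelAt_hitTime ⟨t, hct⟩
  rw [reflect]
  omega

end Reflection

section Weights

variable {n m : ℕ} {g : ℤ → ℝ}

theorem pathWeight_nonneg (hg : ∀ x, -(m : ℤ) ≤ x → x ≤ m → 0 ≤ g x) {s : Fin n → ℤ}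
    (hs : s ∈ paths n m) : 0 ≤ pathWeight n g s :=
  Finset.prod_nonneg fun i _ =>
    have := Finset.mem_Icc.mp (Fintype.mem_piFinset.mp hs i)
    hg _ this.1 this.2

theorem pathWeight_le_pathWeight {f : ℤ → ℝ} (hf : ∀ x, -(m : ℤ) ≤ x → x ≤ m → 0 ≤ f x)
    (hfg : ∀ x, -(m : ℤ) ≤ x → x ≤ m → f x ≤ g x) {s : Fin n → ℤ} (hs : s ∈ paths n m) :
    pathWeight n f s ≤ pathWeight n g s :=
  Finset.prod_le_prod
    (fun i _ =>
      have := Finset.mem_Icc.mp (Fintype.mem_piFinset.mp hs i)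
      hf _ this.1 this.2)
    fun i _ =>
      have := Finset.mem_Icc.mp (Fintype.mem_piFinset.mp hs i)
      hfg _ this.1 this.2

theorem pathWeight_neg (hg_even : ∀ x, g (-x) = g x) (s : Fin n → ℤ) :
    pathWeight n g (-s) = pathWeight n g s :=
  Finset.prod_congr rfl fun i _ => hg_even (s i)

theorem pathWeight_reflAt (hg_even : ∀ x, g (-x) = g x) (τ : ℕ) (s : Fin n → ℤ) :
    pathWeight n g (reflAt τ s) = pathWeight n g s := by
  refine Finset.prod_congr rfl fun i _ => ?_
  unfold reflAt
  split_ifs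
  · rfl
  · exact hg_even (s i)

theorem sum_pathWeight_reaching_le (hg_even : ∀ x, g (-x) = g x)
    (hg : ∀ x, -(m : ℤ) ≤ x → x ≤ m → 0 ≤ g x) (c : ℤ) :
    ∑ s ∈ (paths n m).filter (fun s => ∃ t ≤ n, c ≤ levelAt n s t), pathWeight n g s ≤
      2 * ∑ s ∈ (paths n m).filter (fun s => c ≤ levelAt n s n), pathWeight n g s := by
  set A := (paths n m).filter (fun s => ∃ t ≤ n, c ≤ levelAt n s t)
  set B := (paths n m).filter (fun s => c ≤ levelAt n s n)
  have hBA : B ⊆ A := fun s hs => by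
    rw [Finset.mem_filter] at hs ⊢
    exact ⟨hs.1, n, le_rfl, hs.2⟩
  have hreflect : ∀ s ∈ A \ B, reflect c s ∈ B ∧ reflect c (reflect c s) = s := by
    intro s hs
    simp only [A, B, Finset.mem_sdiff, Finset.mem_filter, not_and, not_le] at hs
    obtain ⟨⟨hsp, t, htn, hct⟩, hend⟩ := hs
    exact ⟨Finset.mem_filter.mpr ⟨reflAt_mem_paths _ hsp, le_levelAt_reflect htn hct (hend hsp)⟩,
      reflect_reflect ⟨t, hct⟩⟩
  have hinj : Set.InjOn (reflect (n := n) c) ↑(A \ B) := by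
    intro x hx y hy hxy
    rw [← (hreflect x hx).2, ← (hreflect y hy).2, hxy]
  have hAB : ∑ s ∈ A \ B, pathWeight n g s ≤ ∑ s ∈ B, pathWeight n g s :=
    calc ∑ s ∈ A \ B, pathWeight n g s
        = ∑ s ∈ (A \ B).image (reflect c), pathWeight n g s := by
          rw [Finset.sum_image hinj]
          exact Finset.sum_congr rfl fun s _ => (pathWeight_reflAt hg_even _ s).symm
      _ ≤ ∑ s ∈ B, pathWeight n g s :=
          Finset.sum_le_sum_of_subset_of_nonneg
            (Finset.image_subset_iff.mpr fun s hs => (hreflect s hs).1)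
            fun s hs _ => pathWeight_nonneg hg (Finset.mem_filter.mp hs).1
  rw [← Finset.sum_sdiff hBA]
  linarith

theorem sum_pathWeight_reaching_neg (hg_even : ∀ x, g (-x) = g x) (c : ℤ) :
    ∑ s ∈ (paths n m).filter (fun s => ∃ t ≤ n, levelAt n s t ≤ -c), pathWeight n g s =
      ∑ s ∈ (paths n m).filter (fun s => ∃ t ≤ n, c ≤ levelAt n s t), pathWeight n g s := by
  refine Finset.sum_nbij' (fun s => -s) (fun s => -s) ?_ ?_ (fun s _ => neg_neg s)
    (fun s _ => neg_neg s) fun s _ => (pathWeight_neg hg_even s).symm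
  all_goals
    intro s hs
    simp only [Finset.mem_filter] at hs ⊢
    obtain ⟨hsp, t, htn, hlt⟩ := hs
    exact ⟨neg_mem_paths hsp, t, htn, by rw [levelAt_neg]; omega⟩

end Weights

section Pricing

def avgPayoff (n : ℕ) (p S0 K σ dt h : ℝ) (k : ℤ) : ℝ :=
  ∑ j ∈ Finset.range (n + 1), putPayoff n S0 K σ dt h j k * binomP n p j

def StaysInBand (n kbar lbar : ℕ) (s : Fin n → ℤ) : Prop :=
  ∀ t ≤ n, -(lbar : ℤ) ≤ levelAt n s t ∧ levelAt n s t ≤ (kbar : ℤ)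

variable {n m : ℕ}

theorem binomP_nonneg {p : ℝ} (hp0 : 0 ≤ p) (hp1 : p ≤ 1) (j : ℕ) : 0 ≤ binomP n p j := by
  have : 0 ≤ 1 - p := sub_nonneg.mpr hp1
  unfold binomP
  positivity

theorem sum_binomP (p : ℝ) : ∑ j ∈ Finset.range (n + 1), binomP n p j = 1 := by
  simp only [binomP, mul_right_comm _ _ ((1 - p) ^ _), mul_comm (n.choose _ : ℝ)]
  rw [← add_pow, add_sub_cancel, one_pow]

theorem putPayoff_le {S0 K : ℝ} (hS0 : 0 ≤ S0) (hK : 0 ≤ K) (σ dt h : ℝ) (j : ℕ) (k : ℤ) :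
    putPayoff n S0 K σ dt h j k ≤ K :=
  max_le (sub_le_self _ (mul_nonneg hS0 (Real.exp_pos _).le)) hK

theorem avgPayoff_le {p S0 K : ℝ} (hp0 : 0 ≤ p) (hp1 : p ≤ 1) (hS0 : 0 ≤ S0) (hK : 0 ≤ K)
    (σ dt h : ℝ) (k : ℤ) : avgPayoff n p S0 K σ dt h k ≤ K :=
  calc avgPayoff n p S0 K σ dt h k ≤ ∑ j ∈ Finset.range (n + 1), K * binomP n p j :=
        Finset.sum_le_sum fun j _ =>
          mul_le_mul_of_nonneg_right (putPayoff_le hS0 hK σ dt h j k) (binomP_nonneg hp0 hp1 j)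
    _ = K := by rw [← Finset.mul_sum, sum_binomP, mul_one]

theorem sum_mul_sum_levelAt_eq {P : Finset (Fin n → ℤ)} {T : Finset ℤ}
    (hP : ∀ s ∈ P, levelAt n s n ∈ T) (f : ℤ → ℝ) (W : (Fin n → ℤ) → ℝ) :
    ∑ k ∈ T, f k * ∑ s ∈ P.filter (fun s => levelAt n s n = k), W s =
      ∑ s ∈ P, f (levelAt n s n) * W s := by
  rw [← Finset.sum_fiberwise_of_maps_to hP]
  refine Finset.sum_congr rfl fun k _ => ?_
  rw [Finset.mul_sum]
  exact Finset.sum_congr rfl fun s hs => by rw [(Finset.mem_filter.mp hs).2]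

theorem Vput_eq_sum_paths (q : ℤ → ℝ) (p S0 K σ τ h r : ℝ) :
    Vput n m q p S0 K σ τ h r = Real.exp (-(r * τ)) *
      ∑ s ∈ paths n m, avgPayoff n p S0 K σ (τ / n) h (levelAt n s n) * pathWeight n q s := by
  rw [Vput, ← sum_mul_sum_levelAt_eq fun s hs => Finset.mem_Icc.mpr
    (abs_le.mp (abs_levelAt_le hs n))]
  simp only [avgPayoff, qfull, Finset.sum_mul]

theorem VTT_eq_sum_paths (q : ℤ → ℝ) (p S0 K σ τ h r : ℝ) (kbar lbar : ℕ) :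
    VTT n m q p S0 K σ τ h r kbar lbar = Real.exp (-(r * τ)) *
      ∑ s ∈ (paths n m).filter (StaysInBand n kbar lbar),
        avgPayoff n p S0 K σ (τ / n) h (levelAt n s n) * pathWeight n q s := by
  rw [VTT, ← sum_mul_sum_levelAt_eq (P := (paths n m).filter (StaysInBand n kbar lbar))
    fun s hs => Finset.mem_Icc.mpr ((Finset.mem_filter.mp hs).2 n le_rfl)]
  simp only [avgPayoff, qcut, Finset.sum_mul, Finset.filter_filter, StaysInBand, and_comm]

theorem Vput_sub_VTT_eq (q : ℤ → ℝ) (p S0 K σ τ h r : ℝ) (kbar lbar : ℕ) :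
    Vput n m q p S0 K σ τ h r - VTT n m q p S0 K σ τ h r kbar lbar = Real.exp (-(r * τ)) *
      ∑ s ∈ (paths n m).filter (fun s => ¬StaysInBand n kbar lbar s),
        avgPayoff n p S0 K σ (τ / n) h (levelAt n s n) * pathWeight n q s := by
  rw [Vput_eq_sum_paths, VTT_eq_sum_paths, ← mul_sub, ← Finset.sum_filter_add_sum_filter_not
    (paths n m) (StaysInBand n kbar lbar), add_sub_cancel_left]

end Pricing

section Tails

variable {n m : ℕ} {q : ℤ → ℝ}

def symmMax (q : ℤ → ℝ) (x : ℤ) : ℝ :=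
  max (q x) (q (-x))

theorem symmMax_neg (q : ℤ → ℝ) (x : ℤ) : symmMax q (-x) = symmMax q x := by
  rw [symmMax, symmMax, neg_neg, max_comm]

theorem modWeight_eq_pathWeight_symmMax (q : ℤ → ℝ) :
    modWeight n q = pathWeight n (symmMax q) := by
  funext s
  refine Finset.prod_congr rfl fun i _ => ?_
  split_ifs with h
  · simp [symmMax, h]
  · rfl

theorem pathWeight_le_modWeight (hq : ∀ l : ℤ, -(m : ℤ) ≤ l → l ≤ m → 0 ≤ q l)
    {s : Fin n → ℤ} (hs : s ∈ paths n m) : pathWeight n q s ≤ modWeight n q s := by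
  rw [modWeight_eq_pathWeight_symmMax]
  exact pathWeight_le_pathWeight hq (fun x _ _ => le_max_left _ _) hs

theorem avgPayoff_mul_pathWeight_le (hq : ∀ l : ℤ, -(m : ℤ) ≤ l → l ≤ m → 0 ≤ q l)
    {p S0 K : ℝ} (hp0 : 0 ≤ p) (hp1 : p ≤ 1) (hS0 : 0 ≤ S0) (hK : 0 ≤ K) (σ dt h : ℝ)
    {s : Fin n → ℤ} (hs : s ∈ paths n m) :
    avgPayoff n p S0 K σ dt h (levelAt n s n) * pathWeight n q s ≤ K * modWeight n q s :=
  calc _ ≤ K * pathWeight n q s := mul_le_mul_of_nonneg_right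
        (avgPayoff_le hp0 hp1 hS0 hK _ _ _ _) (pathWeight_nonneg hq hs)
    _ ≤ K * modWeight n q s := mul_le_mul_of_nonneg_left (pathWeight_le_modWeight hq hs) hK

theorem qtilde_nonneg (hq : ∀ l : ℤ, -(m : ℤ) ≤ l → l ≤ m → 0 ≤ q l) (k : ℤ) :
    0 ≤ qtilde n m q k :=
  Finset.sum_nonneg fun _ hs =>
    (pathWeight_nonneg hq (Finset.mem_filter.mp hs).1).trans (pathWeight_le_modWeight hq
      (Finset.mem_filter.mp hs).1)

theorem sum_Icc_qtilde_eq (c : ℕ) :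
    ∑ k ∈ Finset.Icc (c + 1) (m * n), qtilde n m q k =
      ∑ s ∈ (paths n m).filter (fun s => (c : ℤ) + 1 ≤ levelAt n s n), modWeight n q s := by
  have hmaps : ∀ s ∈ (paths n m).filter (fun s => (c : ℤ) + 1 ≤ levelAt n s n),
      (levelAt n s n).toNat ∈ Finset.Icc (c + 1) (m * n) := by
    intro s hs
    obtain ⟨hsp, hc⟩ := Finset.mem_filter.mp hs
    have hmn := (abs_le.mp (abs_levelAt_le hsp n)).2
    rw [Finset.mem_Icc, ← Int.ofNat_le, ← Int.ofNat_le, Nat.cast_mul]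
    omega
  rw [← Finset.sum_fiberwise_of_maps_to hmaps]
  refine Finset.sum_congr rfl fun k hk => ?_
  rw [qtilde, Finset.filter_filter]
  refine Finset.sum_congr (Finset.filter_congr fun s _ => ?_) fun _ _ => rfl
  have := (Finset.mem_Icc.mp hk).1
  omega

theorem sum_modWeight_not_staysInBand_le (hq : ∀ l : ℤ, -(m : ℤ) ≤ l → l ≤ m → 0 ≤ q l)
    (kbar lbar : ℕ) :
    ∑ s ∈ (paths n m).filter (fun s => ¬StaysInBand n kbar lbar s), modWeight n q s ≤
      2 * ((∑ k ∈ Finset.Icc (kbar + 1) (m * n), qtilde n m q k) +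
        ∑ k ∈ Finset.Icc (lbar + 1) (m * n), qtilde n m q k) := by
  have hg : ∀ x, -(m : ℤ) ≤ x → x ≤ m → 0 ≤ symmMax q x := fun x h₁ h₂ =>
    le_max_of_le_left (hq x h₁ h₂)
  set W := pathWeight n (symmMax q)
  set U := (paths n m).filter (fun s => ∃ t ≤ n, (kbar : ℤ) + 1 ≤ levelAt n s t)
  set D := (paths n m).filter (fun s => ∃ t ≤ n, levelAt n s t ≤ -((lbar : ℤ) + 1))
  have hexit : (paths n m).filter (fun s => ¬StaysInBand n kbar lbar s) ⊆ U ∪ D := by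
    intro s hs
    obtain ⟨hsp, hout⟩ := Finset.mem_filter.mp hs
    simp only [StaysInBand, not_forall, not_and_or, not_le] at hout
    obtain ⟨t, htn, hout⟩ := hout
    simp only [U, D, Finset.mem_union, Finset.mem_filter]
    rcases hout with hdown | hup
    · exact Or.inr ⟨hsp, t, htn, by omega⟩
    · exact Or.inl ⟨hsp, t, htn, by omega⟩
  have hW : ∀ s ∈ U ∪ D, 0 ≤ W s := fun s hs => pathWeight_nonneg hg <| by
    rcases Finset.mem_union.mp hs with hs | hs <;> exact (Finset.mem_filter.mp hs).1
  rw [sum_Icc_qtilde_eq, sum_Icc_qtilde_eq, modWeight_eq_pathWeight_symmMax]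
  calc _ ≤ ∑ s ∈ U ∪ D, W s := Finset.sum_le_sum_of_subset_of_nonneg hexit fun s hs _ => hW s hs
    _ ≤ ∑ s ∈ U ∪ D, W s + ∑ s ∈ U ∩ D, W s :=
        le_add_of_nonneg_right (Finset.sum_nonneg fun s hs =>
          hW s (Finset.inter_subset_union hs))
    _ = ∑ s ∈ U, W s + ∑ s ∈ D, W s := Finset.sum_union_inter
    _ ≤ _ := by
        rw [mul_add]
        refine add_le_add (sum_pathWeight_reaching_le (symmMax_neg q) hg _) ?_
        rw [sum_pathWeight_reaching_neg (symmMax_neg q)]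
        exact sum_pathWeight_reaching_le (symmMax_neg q) hg _

end Tails

end HScut

open HScut

theorem put_truncation_bound_general_general (n m : ℕ) (hm : 1 ≤ m) (q : ℤ → ℝ)
    (hq : ∀ l : ℤ, -(m : ℤ) ≤ l → l ≤ (m : ℤ) → 0 ≤ q l)
    (S0 K σ τ h r p : ℝ) (hS0 : 0 < S0) (hK : 0 < K)
    (hp0 : 0 ≤ p) (hp1 : p ≤ 1) (kbar lbar : ℕ) :
    Vput n m q p S0 K σ τ h r - VTT n m q p S0 K σ τ h r kbar lbar ≤
      Real.exp (-(r * τ)) * K * ((m : ℝ) + 1) *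
        ((∑ k ∈ Finset.Icc (kbar + 1) (m * n), qtilde n m q (k : ℤ)) +
          (∑ k ∈ Finset.Icc (lbar + 1) (m * n), qtilde n m q (k : ℤ))) := by
  set T := (∑ k ∈ Finset.Icc (kbar + 1) (m * n), qtilde n m q (k : ℤ)) +
    (∑ k ∈ Finset.Icc (lbar + 1) (m * n), qtilde n m q (k : ℤ))
  have hT : 0 ≤ T := add_nonneg (Finset.sum_nonneg fun _ _ => qtilde_nonneg hq _)
    (Finset.sum_nonneg fun _ _ => qtilde_nonneg hq _)
  have hm2 : (2 : ℝ) ≤ m + 1 := by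
    have : (1 : ℝ) ≤ m := by exact_mod_cast hm
    linarith
  rw [Vput_sub_VTT_eq]
  calc _ ≤ Real.exp (-(r * τ)) * ∑ s ∈ (paths n m).filter (fun s => ¬StaysInBand n kbar lbar s),
        K * modWeight n q s :=
        mul_le_mul_of_nonneg_left (Finset.sum_le_sum fun _ hs => avgPayoff_mul_pathWeight_le hq
          hp0 hp1 hS0.le hK.le _ _ _ (Finset.mem_filter.mp hs).1) (Real.exp_pos _).le
    _ ≤ Real.exp (-(r * τ)) * K * (2 * T) := by
        rw [← Finset.mul_sum, ← mul_assoc]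
        gcongr
        exact sum_modWeight_not_staysInBand_le hq kbar lbar
    _ ≤ Real.exp (-(r * τ)) * K * ((m + 1) * T) := by gcongr
    _ = _ := by ring

/-- European put truncation bound (general m):
`V − V^{TT} ≤ e^{−rτ} K (m+1) (∑_{k=k̄+1}^{mn} q̃^{(n)}(k) + ∑_{k=l̄+1}^{mn} q̃^{(n)}(k))`. -/
theorem put_truncation_bound_general (n m : ℕ) (hn : 1 ≤ n) (hm : 1 ≤ m) (q : ℤ → ℝ)
    (hq : ∀ l : ℤ, -(m : ℤ) ≤ l → l ≤ (m : ℤ) → 0 ≤ q l)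
    (hsum : ∑ l ∈ Finset.Icc (-(m : ℤ)) (m : ℤ), q l = 1)
    (S0 K σ τ h r p : ℝ) (hS0 : 0 < S0) (hK : 0 < K) (hh : 0 < h) (hτ : 0 < τ)
    (hp0 : 0 ≤ p) (hp1 : p ≤ 1) (kbar lbar : ℕ) :
    Vput n m q p S0 K σ τ h r - VTT n m q p S0 K σ τ h r kbar lbar ≤
      Real.exp (-(r * τ)) * K * ((m : ℝ) + 1) *
        ((∑ k ∈ Finset.Icc (kbar + 1) (m * n), qtilde n m q (k : ℤ)) +
          (∑ k ∈ Finset.Icc (lbar + 1) (m * n), qtilde n m q (k : ℤ))) :=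
  put_truncation_bound_general_general n m hm q hq S0 K σ τ h r p hS0 hK hp0 hp1 kbar lbar
end
end

section
/- Assume r ≥ 0 and take boundary value b = K in the truncated backward recursions. Then the American and European put prices satisfy |V_A^K(0,0,0) − V_A(0,0,0)| ≤ |V_E^K(0,0,0) − V_E(0,0,0)|. -/
open Finset

open scoped Classical

noncomputable section

/-!
Every full put price is at most `K`: payoffs are at most `K` and the one-step discounted
expectation is monotone and shrinks constants when `r ≥ 0`. Hence a boundary value `b ≥ K` only
raises prices, and by backward induction the American gap `V_A^b − V_A` is dominated by the
European gap `V_E^b − V_E`. Off the band the gaps are `b − V_A ≤ b − V_E` because `V_E ≤ V_A`;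
inside it the early-exercise `max` with a common payoff does not increase a nonnegative
difference, and the expectation operator is linear and monotone.
-/

namespace HScut

def stepExpect (m : ℕ) (q : ℤ → ℝ) (p e : ℝ) (f : ℕ → ℤ → ℝ) (j : ℕ) (l : ℤ) : ℝ :=
  e * ∑ k ∈ Icc (-(m : ℤ)) m, (f (j + 1) (l + k) * p + f j (l + k) * (1 - p)) * q k

section StepExpect

variable {m : ℕ} {q : ℤ → ℝ} {p e : ℝ}

theorem stepExpect_mono (hq : ∀ l ∈ Icc (-(m : ℤ)) m, 0 ≤ q l) (hp0 : 0 ≤ p) (hp1 : p ≤ 1)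
    (he : 0 ≤ e) : Monotone (stepExpect m q p e) := fun _ _ hfg _ _ =>
  mul_le_mul_of_nonneg_left (sum_le_sum fun k hk => mul_le_mul_of_nonneg_right
    (add_le_add (mul_le_mul_of_nonneg_right (hfg _ _) hp0)
      (mul_le_mul_of_nonneg_right (hfg _ _) (sub_nonneg.2 hp1))) (hq k hk)) he

theorem stepExpect_sub (f g : ℕ → ℤ → ℝ) :
    stepExpect m q p e (f - g) = stepExpect m q p e f - stepExpect m q p e g := by
  ext j l
  simp only [stepExpect, Pi.sub_apply, ← mul_sub, ← sum_sub_distrib]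
  congr 1
  exact sum_congr rfl fun _ _ => by ring

theorem stepExpect_const (hsum : ∑ l ∈ Icc (-(m : ℤ)) m, q l = 1) (c : ℝ) :
    stepExpect m q p e (fun _ _ => c) = fun _ _ => e * c := by
  ext j l
  simp only [stepExpect, ← mul_add, add_sub_cancel, mul_one, ← mul_sum, hsum]

theorem stepExpect_le_const (hq : ∀ l ∈ Icc (-(m : ℤ)) m, 0 ≤ q l)
    (hsum : ∑ l ∈ Icc (-(m : ℤ)) m, q l = 1) (hp0 : 0 ≤ p) (hp1 : p ≤ 1) (he0 : 0 ≤ e)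
    (he1 : e ≤ 1) {c : ℝ} (hc : 0 ≤ c) {f : ℕ → ℤ → ℝ} (hf : f ≤ fun _ _ => c) :
    stepExpect m q p e f ≤ fun _ _ => c :=
  (stepExpect_mono hq hp0 hp1 he0 hf).trans <| by
    rw [stepExpect_const hsum]
    exact fun _ _ => mul_le_of_le_one_left hc he1

end StepExpect

theorem max_sub_max_le_sub_of_le {α : Type*} [AddCommGroup α] [LinearOrder α]
    [IsOrderedAddMonoid α] {a b : α} (c : α) (hba : b ≤ a) : max a c - max b c ≤ a - b :=
  (max_sub_max_le_max a c b c).trans <| by rw [sub_self, max_eq_left (sub_nonneg.2 hba)]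

theorem Sval_nonneg {S0 : ℝ} (hS0 : 0 ≤ S0) (σ dt h i : ℝ) (j : ℕ) (l : ℤ) :
    0 ≤ Sval S0 σ dt h i j l :=
  mul_nonneg hS0 (Real.exp_pos _).le

section Prices

variable {n m : ℕ} {q : ℤ → ℝ} {p dt S0 K σ h r b : ℝ} {kbar lbar : ℕ}

theorem VEfull_succ (d : ℕ) :
    VEfull n m q p dt S0 K σ h r (d + 1) =
      stepExpect m q p (Real.exp (-(r * dt))) (VEfull n m q p dt S0 K σ h r d) := rfl

theorem VAfull_succ (d j : ℕ) (l : ℤ) :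
    VAfull n m q p dt S0 K σ h r (d + 1) j l =
      max (stepExpect m q p (Real.exp (-(r * dt))) (VAfull n m q p dt S0 K σ h r d) j l)
        (K - Sval S0 σ dt h ((n : ℝ) - (d + 1)) j l) := rfl

theorem VEtr_succ (d j : ℕ) (l : ℤ) :
    VEtr n m q p dt S0 K σ h r b kbar lbar (d + 1) j l =
      if -(lbar : ℤ) ≤ l ∧ l ≤ (kbar : ℤ) then
        stepExpect m q p (Real.exp (-(r * dt))) (VEtr n m q p dt S0 K σ h r b kbar lbar d) j l
      else b := rfl

theorem VAtr_succ (d j : ℕ) (l : ℤ) :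
    VAtr n m q p dt S0 K σ h r b kbar lbar (d + 1) j l =
      if -(lbar : ℤ) ≤ l ∧ l ≤ (kbar : ℤ) then
        max (stepExpect m q p (Real.exp (-(r * dt)))
            (VAtr n m q p dt S0 K σ h r b kbar lbar d) j l)
          (K - Sval S0 σ dt h ((n : ℝ) - (d + 1)) j l)
      else b := rfl

theorem VEfull_le_VAfull (hq : ∀ l ∈ Icc (-(m : ℤ)) m, 0 ≤ q l) (hp0 : 0 ≤ p) (hp1 : p ≤ 1)
    (d : ℕ) : VEfull n m q p dt S0 K σ h r d ≤ VAfull n m q p dt S0 K σ h r d := by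
  induction d with
  | zero => exact le_refl _
  | succ d ih =>
    intro j l
    rw [VEfull_succ, VAfull_succ]
    exact (stepExpect_mono hq hp0 hp1 (Real.exp_pos _).le ih j l).trans (le_max_left _ _)

theorem VAfull_le_const (hq : ∀ l ∈ Icc (-(m : ℤ)) m, 0 ≤ q l)
    (hsum : ∑ l ∈ Icc (-(m : ℤ)) m, q l = 1) (hp0 : 0 ≤ p) (hp1 : p ≤ 1) (hS0 : 0 ≤ S0)
    (hK : 0 ≤ K) (hr : 0 ≤ r) (hdt : 0 ≤ dt) (d : ℕ) :
    VAfull n m q p dt S0 K σ h r d ≤ fun _ _ => K := by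
  have he1 : Real.exp (-(r * dt)) ≤ 1 := Real.exp_le_one_iff.2 (neg_nonpos.2 (mul_nonneg hr hdt))
  induction d with
  | zero => exact fun j l => max_le (sub_le_self K (Sval_nonneg hS0 _ _ _ _ j l)) hK
  | succ d ih =>
    intro j l
    rw [VAfull_succ]
    exact max_le (stepExpect_le_const hq hsum hp0 hp1 (Real.exp_pos _).le he1 hK ih j l)
      (sub_le_self K (Sval_nonneg hS0 _ _ _ _ j l))

theorem VAfull_le_VAtr (hq : ∀ l ∈ Icc (-(m : ℤ)) m, 0 ≤ q l)
    (hsum : ∑ l ∈ Icc (-(m : ℤ)) m, q l = 1) (hp0 : 0 ≤ p) (hp1 : p ≤ 1) (hS0 : 0 ≤ S0)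
    (hK : 0 ≤ K) (hr : 0 ≤ r) (hdt : 0 ≤ dt) (hKb : K ≤ b) (d : ℕ) :
    VAfull n m q p dt S0 K σ h r d ≤ VAtr n m q p dt S0 K σ h r b kbar lbar d := by
  have hfull_le_b (d j l) : VAfull n m q p dt S0 K σ h r d j l ≤ b :=
    (VAfull_le_const hq hsum hp0 hp1 hS0 hK hr hdt d j l).trans hKb
  induction d with
  | zero =>
    intro j l
    simp only [VAtr]
    split_ifs
    · exact le_refl _
    · exact hfull_le_b 0 j l
  | succ d ih =>
    intro j l
    rw [VAtr_succ]
    split_ifs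
    · rw [VAfull_succ]
      exact max_le_max_right _ (stepExpect_mono hq hp0 hp1 (Real.exp_pos _).le ih j l)
    · exact hfull_le_b (d + 1) j l

theorem VAtr_sub_VAfull_le (hq : ∀ l ∈ Icc (-(m : ℤ)) m, 0 ≤ q l)
    (hsum : ∑ l ∈ Icc (-(m : ℤ)) m, q l = 1) (hp0 : 0 ≤ p) (hp1 : p ≤ 1) (hS0 : 0 ≤ S0)
    (hK : 0 ≤ K) (hr : 0 ≤ r) (hdt : 0 ≤ dt) (hKb : K ≤ b) (d : ℕ) :
    VAtr n m q p dt S0 K σ h r b kbar lbar d - VAfull n m q p dt S0 K σ h r d ≤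
      VEtr n m q p dt S0 K σ h r b kbar lbar d - VEfull n m q p dt S0 K σ h r d := by
  have hmono := stepExpect_mono (e := Real.exp (-(r * dt))) hq hp0 hp1 (Real.exp_pos _).le
  induction d with
  | zero =>
    intro j l
    simp only [Pi.sub_apply, VAtr, VEtr, VAfull, VEfull]
    split_ifs <;> exact le_refl _
  | succ d ih =>
    intro j l
    simp only [Pi.sub_apply]
    rw [VAtr_succ, VEtr_succ]
    split_ifs
    · rw [VAfull_succ, VEfull_succ]
      set x := stepExpect m q p _ (VAtr n m q p dt S0 K σ h r b kbar lbar d) j l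
      set y := stepExpect m q p _ (VAfull n m q p dt S0 K σ h r d) j l
      have hyx : y ≤ x :=
        hmono (VAfull_le_VAtr hq hsum hp0 hp1 hS0 hK hr hdt hKb d) j l
      calc max x _ - max y _ ≤ x - y := max_sub_max_le_sub_of_le _ hyx
        _ ≤ _ := by simpa only [stepExpect_sub, Pi.sub_apply] using hmono ih j l
    · exact sub_le_sub_left (VEfull_le_VAfull hq hp0 hp1 (d + 1) j l) b

end Prices

end HScut

open HScut

theorem american_error_le_european_error_general (n m : ℕ) (q : ℤ → ℝ)
    (hq : ∀ l : ℤ, -(m : ℤ) ≤ l → l ≤ (m : ℤ) → 0 ≤ q l)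
    (hsum : ∑ l ∈ Finset.Icc (-(m : ℤ)) (m : ℤ), q l = 1)
    (S0 K σ τ h r p : ℝ) (hS0 : 0 < S0) (hK : 0 < K) (hτ : 0 < τ)
    (hr : 0 ≤ r) (hp0 : 0 ≤ p) (hp1 : p ≤ 1) (kbar lbar : ℕ) :
    |VAtr n m q p (τ / n) S0 K σ h r K kbar lbar n 0 0 -
        VAfull n m q p (τ / n) S0 K σ h r n 0 0| ≤
      |VEtr n m q p (τ / n) S0 K σ h r K kbar lbar n 0 0 -
        VEfull n m q p (τ / n) S0 K σ h r n 0 0| := by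
  have hq' : ∀ l ∈ Icc (-(m : ℤ)) m, 0 ≤ q l := fun l hl => hq l (mem_Icc.1 hl).1 (mem_Icc.1 hl).2
  have hdt : 0 ≤ τ / n := by positivity
  rw [abs_of_nonneg (sub_nonneg.2
    (VAfull_le_VAtr hq' hsum hp0 hp1 hS0.le hK.le hr hdt le_rfl n 0 0))]
  exact (VAtr_sub_VAfull_le hq' hsum hp0 hp1 hS0.le hK.le hr hdt le_rfl n 0 0).trans
    (le_abs_self _)

/-- Theorem: with boundary value `b = K` and `r ≥ 0`, the truncated American and European
put prices satisfy `|V_A^K(0,0,0) − V_A(0,0,0)| ≤ |V_E^K(0,0,0) − V_E(0,0,0)|`. -/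
theorem american_error_le_european_error (n m : ℕ) (hn : 1 ≤ n) (hm : 1 ≤ m) (q : ℤ → ℝ)
    (hq : ∀ l : ℤ, -(m : ℤ) ≤ l → l ≤ (m : ℤ) → 0 ≤ q l)
    (hsum : ∑ l ∈ Finset.Icc (-(m : ℤ)) (m : ℤ), q l = 1)
    (S0 K σ τ h r p : ℝ) (hS0 : 0 < S0) (hK : 0 < K) (hh : 0 < h) (hτ : 0 < τ)
    (hr : 0 ≤ r) (hp0 : 0 ≤ p) (hp1 : p ≤ 1) (kbar lbar : ℕ) :
    |VAtr n m q p (τ / n) S0 K σ h r K kbar lbar n 0 0 -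
        VAfull n m q p (τ / n) S0 K σ h r n 0 0| ≤
      |VEtr n m q p (τ / n) S0 K σ h r K kbar lbar n 0 0 -
        VEfull n m q p (τ / n) S0 K σ h r n 0 0| :=
  american_error_le_european_error_general n m q hq hsum S0 K σ τ h r p hS0 hK hτ hr hp0 hp1 kbar
    lbar
end
end
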